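/- arXiv:1806.05936 — 3 statements merged into one kernel-verified Lean document; each statement's English description precedes it below -/
import Mathlib

section
/- Fix an integer k ≥ 2. There exists a constant c_k ∈ ℕ such that for every n, every k-hypergraph G = (V, E) with |V| = n and edge pseudo-density p = |E|/n^k, and every natural number u with c_k ≤ u ≤ n, there exists a subset U ⊆ V with |U| = u such that e(U) ≥ 0.99 · p · u^k. -/
/-- A `k`-hypergraph on the vertex type `V`: a multiset of hyperedges, each a
`k`-element subset of `V` (repeated hyperedges allowed). -/
structure HG (k : ℕ) (V : Type) where
  E : Multiset (Finset V)
  uniform : ∀ e ∈ E, e.card = k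

open scoped Classical in
/-- `eU G U` is the number of hyperedges of `G` (with multiplicity) all of whose
vertices lie in `U`. -/
noncomputable def eU {k : ℕ} {V : Type} (G : HG k V) (U : Finset V) : ℕ :=
  Multiset.card (G.E.filter (fun e => e ⊆ U))

/-!
Average `e(U)` over all `u`-subsets `U`: each hyperedge lies in `C(n-k, u-k)` of the `C(n, u)`
of them, so some `U` has `e(U) ≥ |E| · (u)ₖ / (n)ₖ ≥ |E| · (u)ₖ / nᵏ`, writing `(m)ₖ` for the
falling factorial. By Bernoulli's inequality `(u)ₖ ≥ (u - k)ᵏ ≥ (1 - k²/u) uᵏ`, which is at least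
`0.99 uᵏ` once `u ≥ 100 k²`.
-/

open Finset

theorem Nat.choose_mul_descFactorial {n u k : ℕ} (hku : k ≤ u) :
    n.choose u * u.descFactorial k = n.descFactorial k * (n - k).choose (u - k) := by
  rw [descFactorial_eq_factorial_mul_choose, descFactorial_eq_factorial_mul_choose,
    mul_left_comm, choose_mul hku, mul_assoc]

theorem one_sub_sq_div_mul_pow_le_descFactorial {k u : ℕ} (hku : k ≤ u) :
    (1 - (k : ℝ) ^ 2 / u) * (u : ℝ) ^ k ≤ u.descFactorial k := by
  rcases u.eq_zero_or_pos with rfl | hu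
  · obtain rfl : k = 0 := by omega
    simp
  have hu' : (0 : ℝ) < u := by exact_mod_cast hu
  have hbernoulli : 1 - (k : ℝ) ^ 2 / u ≤ (1 - k / u) ^ k := by
    have hk : (k / u : ℝ) ≤ 1 := by rw [div_le_one hu']; exact_mod_cast hku
    calc 1 - (k : ℝ) ^ 2 / u = 1 + k * -(k / u : ℝ) := by ring
      _ ≤ (1 + -(k / u : ℝ)) ^ k := one_add_mul_le_pow (by linarith) k
      _ = (1 - k / u) ^ k := by ring
  calc (1 - (k : ℝ) ^ 2 / u) * (u : ℝ) ^ k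
      ≤ (1 - k / u) ^ k * (u : ℝ) ^ k := by gcongr
    _ = ((u - k : ℕ) : ℝ) ^ k := by
        rw [← mul_pow, Nat.cast_sub hku]
        field_simp
    _ ≤ u.descFactorial k := by
        exact_mod_cast (Nat.pow_le_pow_left (by omega) k).trans (u.pow_sub_le_descFactorial k)

section
variable {V : Type} [Fintype V] {k : ℕ}

open scoped Classical in
theorem sum_eU_powersetCard (G : HG k V) {u : ℕ} (hku : k ≤ u) :
    ∑ U ∈ univ.powersetCard u, eU G U =
      Multiset.card G.E * (Fintype.card V - k).choose (u - k) := by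
  obtain ⟨E, hE⟩ := G
  simp only [eU]
  induction E using Multiset.induction_on with
  | empty => simp
  | cons e E ih =>
    have he : #e = k := hE e (Multiset.mem_cons_self e E)
    have hsupersets :
        #((univ.powersetCard u).filter (e ⊆ ·)) = (Fintype.card V - k).choose (u - k) := by
      rw [card_filter_powersetCard_subset e univ u (subset_univ e) (he ▸ hku), card_univ, he]
    simp only [Multiset.filter_cons, Multiset.card_add, sum_add_distrib,
      ih fun f hf => hE f (Multiset.mem_cons_of_mem hf), Multiset.card_cons]
    simp only [apply_ite Multiset.card, Multiset.card_singleton, Multiset.card_zero, sum_boole,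
      Nat.cast_id, ← hsupersets]
    ring

theorem exists_card_mul_choose_le_choose_mul_eU (G : HG k V) {u : ℕ} (hku : k ≤ u)
    (hun : u ≤ Fintype.card V) :
    ∃ U : Finset V, #U = u ∧
      Multiset.card G.E * (Fintype.card V - k).choose (u - k) ≤
        (Fintype.card V).choose u * eU G U := by
  have hS : (univ.powersetCard u : Finset (Finset V)).Nonempty := by
    rwa [powersetCard_nonempty, card_univ]
  obtain ⟨U, hU, hle⟩ := exists_le_of_sum_le hS
    (f := fun _ => Multiset.card G.E * (Fintype.card V - k).choose (u - k))
    (g := fun U => (Fintype.card V).choose u * eU G U) (by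
      rw [sum_const, ← mul_sum, sum_eU_powersetCard G hku, card_powersetCard, card_univ,
        smul_eq_mul])
  exact ⟨U, (mem_powersetCard.mp hU).2, hle⟩

theorem exists_card_mul_descFactorial_le_descFactorial_mul_eU (G : HG k V) {u : ℕ}
    (hku : k ≤ u) (hun : u ≤ Fintype.card V) :
    ∃ U : Finset V, #U = u ∧
      Multiset.card G.E * u.descFactorial k ≤ (Fintype.card V).descFactorial k * eU G U := by
  obtain ⟨U, hU, hle⟩ := exists_card_mul_choose_le_choose_mul_eU G hku hun
  refine ⟨U, hU, Nat.le_of_mul_le_mul_left ?_ (Nat.choose_pos hun)⟩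
  calc (Fintype.card V).choose u * (Multiset.card G.E * u.descFactorial k)
      = (Fintype.card V).descFactorial k *
          (Multiset.card G.E * (Fintype.card V - k).choose (u - k)) := by
        rw [mul_left_comm, Nat.choose_mul_descFactorial hku, mul_left_comm]
    _ ≤ (Fintype.card V).descFactorial k * ((Fintype.card V).choose u * eU G U) := by gcongr
    _ = (Fintype.card V).choose u * ((Fintype.card V).descFactorial k * eU G U) := by ring

end

theorem dense_subset_exists_general (k : ℕ) :
    ∃ c : ℕ, ∀ (V : Type) [Fintype V] (G : HG k V) (n u : ℕ),
      Fintype.card V = n → c ≤ u → u ≤ n →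
      ∃ U : Finset V, U.card = u ∧
        (0.99 : ℝ) * ((Multiset.card G.E : ℝ) / (n : ℝ) ^ k) * (u : ℝ) ^ k ≤ (eU G U : ℝ) := by
  refine ⟨100 * k ^ 2, fun V _ G n u hn hcu hun => ?_⟩
  subst hn
  have hku : k ≤ u := by nlinarith
  obtain ⟨U, hU, hcount⟩ := exists_card_mul_descFactorial_le_descFactorial_mul_eU G hku hun
  refine ⟨U, hU, ?_⟩
  have hdesc : (0.99 : ℝ) * (u : ℝ) ^ k ≤ u.descFactorial k := by
    refine le_trans ?_ (one_sub_sq_div_mul_pow_le_descFactorial hku)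
    have hcu' : (100 * k ^ 2 : ℝ) ≤ u := by exact_mod_cast hcu
    have : (k : ℝ) ^ 2 / u ≤ 1 / 100 :=
      div_le_of_le_mul₀ (by positivity) (by norm_num) (by linarith)
    gcongr
    linarith
  have hdesc_le_pow : ((Fintype.card V).descFactorial k : ℝ) ≤ (Fintype.card V : ℝ) ^ k := by
    exact_mod_cast Nat.descFactorial_le_pow _ k
  have hpow_pos : (0 : ℝ) < (Fintype.card V : ℝ) ^ k :=
    lt_of_lt_of_le (by exact_mod_cast Nat.descFactorial_pos.mpr (hku.trans hun)) hdesc_le_pow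
  rw [mul_comm, ← mul_assoc, ← mul_div_assoc, div_le_iff₀ hpow_pos]
  calc (u : ℝ) ^ k * 0.99 * Multiset.card G.E
      ≤ u.descFactorial k * Multiset.card G.E := by gcongr; linarith
    _ ≤ (Fintype.card V).descFactorial k * eU G U := by rw [mul_comm]; exact_mod_cast hcount
    _ ≤ eU G U * (Fintype.card V : ℝ) ^ k := by rw [mul_comm]; gcongr

/-- Every `k`-hypergraph on `n` vertices with edge pseudo-density `p = |E|/nᵏ` has,
for every `c_k ≤ u ≤ n`, a vertex subset of size `u` inducing at least `0.99·p·uᵏ`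
hyperedges, where `c_k` depends only on `k`. -/
theorem dense_subset_exists (k : ℕ) (hk : 2 ≤ k) :
    ∃ c : ℕ, ∀ (V : Type) [Fintype V] (G : HG k V) (n u : ℕ),
      Fintype.card V = n → c ≤ u → u ≤ n →
      ∃ U : Finset V, U.card = u ∧
        (0.99 : ℝ) * ((Multiset.card G.E : ℝ) / (n : ℝ) ^ k) * (u : ℝ) ^ k ≤ (eU G U : ℝ) :=
  dense_subset_exists_general k
end

section
/- Let k ≥ 2 be an integer and β ∈ (0,1) a real number. There exists n₀ ∈ ℕ such that for every n ≥ n₀ and every k-hypergraph G with 2^n vertices and m hyperedges (counted with multiplicity), there exists a set A of vertices of G with |A| = ⌊2^{βn}⌋ such that the number of hyperedges of G incident on at least one vertex of A is at least (k/4)·2^{(β−1)n}·m. -/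
/-!
Choose the vertices of `A` greedily. If the current set misses `s` hyperedges, their total
degree on the `N - |A|` remaining vertices is `k s`, so some vertex meets at least a `k / N`
fraction of them. After `a` steps at most `m (1 - k/N)^a` hyperedges are missed, and
`(1 - x)^a ≤ 1/(1 + a x) ≤ 1 - a x / 2` whenever `a x ≤ 1`. With `N = 2ⁿ` and
`a = ⌊2^{βn}⌋ ≥ 2^{βn} / 2`, the condition `a k ≤ N` holds once `2^{(1-β)n} ≥ k`.
-/

open Finset Filter

theorem one_sub_pow_le_one_sub_mul_div_two {x : ℝ} (hx : 0 ≤ x) {a : ℕ} (hax : a * x ≤ 1) :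
    (1 - x) ^ a ≤ 1 - a * x / 2 := by
  rcases a.eq_zero_or_pos with rfl | ha
  · simp
  have hx1 : x ≤ 1 := le_trans (le_mul_of_one_le_left hx (by exact_mod_cast ha)) hax
  have hbernoulli : 1 + a * x ≤ (1 + x) ^ a := one_add_mul_le_pow (by linarith) a
  have hprod : (1 - x) ^ a * (1 + x) ^ a ≤ 1 := by
    rw [← mul_pow]
    exact pow_le_one₀ (by nlinarith) (by nlinarith)
  have hpow : 0 ≤ (1 - x) ^ a := pow_nonneg (by linarith) a
  have hax0 : 0 ≤ a * x := by positivity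
  have hlower : (1 - x) ^ a * (1 + a * x) ≤ 1 :=
    (mul_le_mul_of_nonneg_left hbernoulli hpow).trans hprod
  have hupper : 1 ≤ (1 - a * x / 2) * (1 + a * x) := by nlinarith
  exact le_of_mul_le_mul_right (hlower.trans hupper) (by positivity)

section Hitting

variable {V : Type*} [Fintype V] [DecidableEq V] {k : ℕ}

theorem sum_card_filter_mem_eq_mul_card (S : Multiset (Finset V)) (hS : ∀ e ∈ S, e.card = k) :
    ∑ v, Multiset.card (S.filter (v ∈ ·)) = k * Multiset.card S := by
  induction S using Multiset.induction with
  | empty => simp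
  | cons e S ih =>
    simp only [Multiset.mem_cons, forall_eq_or_imp] at hS
    simp [Multiset.filter_cons, apply_ite, sum_add_distrib, sum_ite_mem, ih hS.2, hS.1, mul_add,
      add_comm]

theorem exists_notMem_mul_card_le_mul_card_filter_mem (S : Multiset (Finset V))
    (hS : ∀ e ∈ S, e.card = k) {A : Finset V} (hA : A.card < Fintype.card V)
    (hSA : ∀ e ∈ S, Disjoint e A) :
    ∃ v ∉ A, k * Multiset.card S ≤
      (Fintype.card V - A.card) * Multiset.card (S.filter (v ∈ ·)) := by
  have hdeg_zero : ∀ v ∈ A, Multiset.card (S.filter (v ∈ ·)) = 0 := fun v hv =>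
    Multiset.card_eq_zero.2 <| Multiset.filter_eq_nil.2 fun e he hve =>
      disjoint_left.1 (hSA e he) hve hv
  have hsum : ∑ v ∈ Aᶜ, Multiset.card (S.filter (v ∈ ·)) = k * Multiset.card S := by
    rw [← sum_card_filter_mem_eq_mul_card S hS, ← sum_add_sum_compl A, sum_eq_zero hdeg_zero,
      zero_add]
  have hAc : Aᶜ.card = Fintype.card V - A.card := card_compl A
  obtain ⟨v, hv, hle⟩ := exists_le_of_sum_le (s := Aᶜ)
    (f := fun _ => k * Multiset.card S)
    (g := fun v => (Fintype.card V - A.card) * Multiset.card (S.filter (v ∈ ·)))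
    (card_pos.1 (by omega)) (by rw [sum_const, ← mul_sum, hsum, hAc, smul_eq_mul])
  exact ⟨v, mem_compl.1 hv, hle⟩

theorem exists_card_eq_card_filter_disjoint_le (S : Multiset (Finset V))
    (hS : ∀ e ∈ S, e.card = k) (hk : 0 < k) {j : ℕ} (hj : j * k ≤ Fintype.card V) :
    ∃ A : Finset V, A.card = j ∧
      (Multiset.card (S.filter (Disjoint · A)) : ℝ) ≤
        Multiset.card S * (1 - k / Fintype.card V) ^ j := by
  induction j with
  | zero => exact ⟨∅, card_empty, by simp⟩
  | succ j ih =>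
    set N := Fintype.card V
    have hjN : j < N := by nlinarith
    have hkN : k ≤ N := by nlinarith
    obtain ⟨A, hA, hle⟩ := ih (by nlinarith)
    set T := S.filter (Disjoint · A)
    obtain ⟨v, hvA, hv⟩ := exists_notMem_mul_card_le_mul_card_filter_mem T
      (fun e he => hS e (Multiset.mem_of_mem_filter he)) (hA ▸ hjN)
      (fun e he => (Multiset.mem_filter.1 he).2)
    refine ⟨insert v A, by rw [card_insert_of_notMem hvA, hA], ?_⟩
    have hfilter : S.filter (Disjoint · (insert v A)) = T.filter (v ∉ ·) := by
      simp only [T, Multiset.filter_filter, disjoint_insert_right, and_comm]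
    have hsplit := congrArg Multiset.card (Multiset.filter_add_not (v ∈ ·) T)
    rw [Multiset.card_add] at hsplit
    have hNpos : (0 : ℝ) < N := by exact_mod_cast (show 0 < N by omega)
    have hv_real : (k : ℝ) * Multiset.card T ≤ (N - j) * Multiset.card (T.filter (v ∈ ·)) := by
      have := (Nat.cast_le (α := ℝ)).2 hv
      push_cast [hA, Nat.cast_sub (show j ≤ Fintype.card V by omega)] at this
      exact this
    have hdeg : (Multiset.card T : ℝ) * (k / N) ≤ Multiset.card (T.filter (v ∈ ·)) := by
      rw [mul_div_assoc', div_le_iff₀ hNpos]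
      nlinarith [(Nat.cast_nonneg j : (0 : ℝ) ≤ j),
        (Nat.cast_nonneg _ : (0 : ℝ) ≤ Multiset.card (T.filter (v ∈ ·)))]
    have hsplit' : (Multiset.card (T.filter (v ∈ ·)) : ℝ) + Multiset.card (T.filter (v ∉ ·)) =
        Multiset.card T := by exact_mod_cast hsplit
    rw [hfilter]
    calc (Multiset.card (T.filter (v ∉ ·)) : ℝ) ≤ Multiset.card T * (1 - k / N) := by linarith
      _ ≤ Multiset.card S * (1 - k / N) ^ j * (1 - k / N) := by
        refine mul_le_mul_of_nonneg_right hle ?_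
        rw [sub_nonneg, div_le_one hNpos]
        exact_mod_cast hkN
      _ = Multiset.card S * (1 - k / N) ^ (j + 1) := by ring

theorem exists_card_eq_mul_le_card_filter_inter_nonempty (S : Multiset (Finset V))
    (hS : ∀ e ∈ S, e.card = k) (hk : 0 < k) {a : ℕ} (hak : a * k ≤ Fintype.card V) :
    ∃ A : Finset V, A.card = a ∧
      (Multiset.card S : ℝ) * a * k / (2 * Fintype.card V) ≤
        Multiset.card (S.filter fun e => (e ∩ A).Nonempty) := by
  obtain ⟨A, hA, hmiss⟩ := exists_card_eq_card_filter_disjoint_le S hS hk hak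
  refine ⟨A, hA, ?_⟩
  have hsplit := congrArg Multiset.card (Multiset.filter_add_not (fun e => (e ∩ A).Nonempty) S)
  simp only [Multiset.card_add, ← disjoint_iff_inter_eq_empty, not_nonempty_iff_eq_empty] at hsplit
  have hsplit' : (Multiset.card (S.filter fun e => (e ∩ A).Nonempty) : ℝ) +
      Multiset.card (S.filter (Disjoint · A)) = Multiset.card S := by exact_mod_cast hsplit
  have hax : a * ((k : ℝ) / Fintype.card V) ≤ 1 := by
    rw [mul_div_assoc']
    exact div_le_one_of_le₀ (by exact_mod_cast hak) (Nat.cast_nonneg _)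
  have hpow := one_sub_pow_le_one_sub_mul_div_two (by positivity) hax
  calc (Multiset.card S : ℝ) * a * k / (2 * Fintype.card V)
      = Multiset.card S * (a * (k / Fintype.card V) / 2) := by ring
    _ ≤ Multiset.card S * (1 - (1 - k / Fintype.card V) ^ a) := by gcongr; linarith
    _ ≤ _ := by linarith

end Hitting

theorem tendsto_rpow_mul_natCast_atTop {b c : ℝ} (hb : 1 < b) (hc : 0 < c) :
    Tendsto (fun n : ℕ => b ^ (c * n)) atTop atTop := by
  have hbc : 1 < b ^ c := Real.one_lt_rpow hb hc
  refine (tendsto_pow_atTop_atTop_of_one_lt hbc).congr fun n => ?_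
  rw [← Real.rpow_natCast, ← Real.rpow_mul (by linarith)]

open scoped Classical in
/-- For `k ≥ 2` and `β ∈ (0,1)`: for all large `n`, every `k`-hypergraph on `2ⁿ`
vertices with `m` hyperedges has a vertex set `A` of size `⌊2^{βn}⌋` meeting at
least `(k/4)·2^{(β−1)n}·m` hyperedges. -/
theorem hitting_set_exists (k : ℕ) (hk : 2 ≤ k) (β : ℝ) (hβ : β ∈ Set.Ioo (0:ℝ) 1) :
    ∃ n₀ : ℕ, ∀ n : ℕ, n₀ ≤ n → ∀ G : HG k (Fin (2 ^ n)),
      ∃ A : Finset (Fin (2 ^ n)), A.card = ⌊(2:ℝ) ^ (β * n)⌋₊ ∧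
        ((k : ℝ) / 4) * (2:ℝ) ^ ((β - 1) * n) * (Multiset.card G.E : ℝ) ≤
          (Multiset.card (G.E.filter (fun e => (e ∩ A).Nonempty)) : ℝ) := by
  obtain ⟨n₀, hn₀⟩ := eventually_atTop.1 <|
    ((tendsto_rpow_mul_natCast_atTop one_lt_two hβ.1).eventually_ge_atTop 2).and
      ((tendsto_rpow_mul_natCast_atTop one_lt_two (sub_pos.2 hβ.2)).eventually_ge_atTop (k : ℝ))
  refine ⟨n₀, fun n hn G => ?_⟩
  obtain ⟨ht, hk_le⟩ := hn₀ n hn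
  set t := (2 : ℝ) ^ (β * n)
  have hcard : ((Fintype.card (Fin (2 ^ n)) : ℕ) : ℝ) = 2 ^ (n : ℝ) := by simp
  have ht_mul : t * 2 ^ ((1 - β) * n) = 2 ^ (n : ℝ) := by
    rw [← Real.rpow_add two_pos]; ring_nf
  have hfloor : t / 2 ≤ ⌊t⌋₊ := by linarith [Nat.sub_one_lt_floor t]
  have hak : ⌊t⌋₊ * k ≤ Fintype.card (Fin (2 ^ n)) := by
    rw [← Nat.cast_le (α := ℝ), hcard, ← ht_mul]; push_cast
    exact mul_le_mul (Nat.floor_le (by positivity)) hk_le (Nat.cast_nonneg _) (by positivity)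
  obtain ⟨A, hA, hhit⟩ :=
    exists_card_eq_mul_le_card_filter_inter_nonempty G.E G.uniform (by omega) hak
  refine ⟨A, hA, le_trans ?_ hhit⟩
  rw [hcard, show (β - 1) * n = β * n - n by ring, Real.rpow_sub two_pos]
  calc (k : ℝ) / 4 * (t / 2 ^ (n : ℝ)) * Multiset.card G.E
      = Multiset.card G.E * (t / 2) * k / (2 * 2 ^ (n : ℝ)) := by ring
    _ ≤ _ := by gcongr
end

section
/- There exists n₀ ∈ ℕ such that for every n ≥ n₀, every integer k ≥ 1, and every natural number f with n ≤ f ≤ n·k − 3, there exists a directed k-hypergraph E on a vertex set V with |V| = 2^n such that |E| ≥ 2^f and every subset U ⊆ V with |U| < 2^{n − (f−n)/k} satisfies e(U) ≤ 2^{n+6}. -/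
/-!
Take `E` uniformly at random among the sets of `2^f` tuples in `(Fin (2^n))^k`. A vertex set `U`
below the threshold spans at most `2^(nk + n - f)` tuples, and a fixed set of `s = 2^(n+6)`
tuples lies in `E` with probability about `2^((f - nk) s)`. A union bound over the at most
`2^(2^n)` sets `U` and the `s`-subsets of `U^k` then succeeds, because
`s! > (s/4)^s = 2^((n+4) s)` outweighs `2^(2^n) ⬝ 2^((n+1) s)`. When `f ≤ n + 6` any `2^f`
tuples will do.
-/

open Finset
open scoped Nat

section RandomSubset

variable {α ι : Type*} [Fintype α] [DecidableEq α]

lemma card_biUnion_filter_superset_le (I : Finset ι) (W : ι → Finset α) {A m s : ℕ}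
    (hW : ∀ i ∈ I, #(W i) ≤ A) (hsm : s ≤ m) :
    #(I.biUnion fun i => ((W i).powersetCard s).biUnion fun S =>
        (powersetCard m univ).filter (S ⊆ ·))
      ≤ #I * A.choose s * (Fintype.card α - s).choose (m - s) := by
  have hsupersets : ∀ S : Finset α, #S = s →
      #((powersetCard m univ).filter (S ⊆ ·)) = (Fintype.card α - s).choose (m - s) := by
    rintro S rfl
    rw [card_filter_powersetCard_subset _ _ _ (subset_univ S) hsm, card_univ]
  calc _ ≤ ∑ i ∈ I, ∑ S ∈ (W i).powersetCard s, #((powersetCard m univ).filter (S ⊆ ·)) :=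
        card_biUnion_le.trans (sum_le_sum fun i _ => card_biUnion_le)
    _ = ∑ i ∈ I, (#(W i)).choose s * (Fintype.card α - s).choose (m - s) := by
        refine sum_congr rfl fun i _ => ?_
        rw [sum_congr rfl fun S hS => hsupersets S (mem_powersetCard.1 hS).2, sum_const,
          card_powersetCard, smul_eq_mul]
    _ ≤ ∑ _i ∈ I, A.choose s * (Fintype.card α - s).choose (m - s) :=
        sum_le_sum fun i hi => Nat.mul_le_mul_right _ (Nat.choose_le_choose s (hW i hi))
    _ = _ := by rw [sum_const, smul_eq_mul, mul_assoc]

theorem exists_card_eq_forall_card_inter_lt (I : Finset ι) (W : ι → Finset α) {A m s : ℕ}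
    (hW : ∀ i ∈ I, #(W i) ≤ A) (hsm : s ≤ m) (hm : m ≤ Fintype.card α)
    (hcount : #I * A.choose s * m.choose s < (Fintype.card α).choose s) :
    ∃ E : Finset α, #E = m ∧ ∀ i ∈ I, #(E ∩ W i) < s := by
  have hlt : #(I.biUnion fun i => ((W i).powersetCard s).biUnion fun S =>
      (powersetCard m univ).filter (S ⊆ ·)) < #(powersetCard m (univ : Finset α)) := by
    refine (card_biUnion_filter_superset_le I W hW hsm).trans_lt ?_
    rw [card_powersetCard, card_univ]
    refine Nat.lt_of_mul_lt_mul_right (a := m.choose s) ?_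
    rw [Nat.choose_mul hsm, mul_right_comm]
    exact Nat.mul_lt_mul_of_pos_right hcount (Nat.choose_pos (Nat.sub_le_sub_right hm s))
  obtain ⟨E, hE, hEnot⟩ := exists_mem_notMem_of_card_lt_card hlt
  refine ⟨E, (mem_powersetCard.1 hE).2, fun i hi => ?_⟩
  by_contra! h
  obtain ⟨S, hS, rfl⟩ := exists_subset_card_eq h
  exact hEnot (mem_biUnion.2 ⟨i, hi, mem_biUnion.2 ⟨S,
    mem_powersetCard.2 ⟨hS.trans inter_subset_right, rfl⟩,
    mem_filter.2 ⟨hE, hS.trans inter_subset_left⟩⟩⟩)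

end RandomSubset

theorem mul_choose_mul_choose_lt_choose {X A M D T s : ℕ} (hAM : A * M ≤ D * T)
    (hsT : 2 * s ≤ T) (hX : X * (2 * D) ^ s < s !) :
    X * A.choose s * M.choose s < T.choose s := by
  have hT : T ^ s ≤ 2 ^ s * (T + 1 - s) ^ s := by
    rw [← mul_pow]
    exact Nat.pow_le_pow_left (by omega) s
  have hpos : 0 < (T + 1 - s) ^ s := pow_pos (by omega) s
  have hAMs : A.descFactorial s * M.descFactorial s ≤ (D * T) ^ s :=
    calc A.descFactorial s * M.descFactorial s ≤ A ^ s * M ^ s :=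
          Nat.mul_le_mul (Nat.descFactorial_le_pow _ _) (Nat.descFactorial_le_pow _ _)
      _ = (A * M) ^ s := (mul_pow _ _ _).symm
      _ ≤ (D * T) ^ s := Nat.pow_le_pow_left hAM s
  -- `s!² ⬝ C(A,s) C(M,s) ≤ (AM)^s` while `s! ⬝ C(T,s) ≥ (T + 1 - s)^s ≥ (T/2)^s`
  refine Nat.lt_of_mul_lt_mul_right (a := s ! * s !) ?_
  calc X * A.choose s * M.choose s * (s ! * s !)
      = X * (A.descFactorial s * M.descFactorial s) := by
        rw [Nat.descFactorial_eq_factorial_mul_choose, Nat.descFactorial_eq_factorial_mul_choose]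
        ring
    _ ≤ X * D ^ s * T ^ s := by
        rw [mul_assoc, ← mul_pow]
        exact Nat.mul_le_mul_left X hAMs
    _ ≤ X * D ^ s * (2 ^ s * (T + 1 - s) ^ s) := Nat.mul_le_mul_left _ hT
    _ = X * (2 * D) ^ s * (T + 1 - s) ^ s := by ring
    _ < s ! * (T + 1 - s) ^ s := Nat.mul_lt_mul_of_pos_right hX hpos
    _ ≤ s ! * T.descFactorial s := Nat.mul_le_mul_left _ (Nat.pow_sub_le_descFactorial T s)
    _ = T.choose s * (s ! * s !) := by
        rw [Nat.descFactorial_eq_factorial_mul_choose]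
        ring

theorem pow_self_lt_four_pow_mul_factorial {n : ℕ} (hn : n ≠ 0) : n ^ n < 4 ^ n * n ! := by
  have hexp : Real.exp n < 4 ^ n := by
    rw [← Real.exp_one_pow]
    exact pow_lt_pow_left₀ (Real.exp_one_lt_d9.trans (by norm_num)) (Real.exp_pos 1).le hn
  have hfac : (0 : ℝ) < n ! := by positivity
  have h := Real.pow_div_factorial_le_exp (n : ℝ) (Nat.cast_nonneg n) n
  rw [div_le_iff₀ hfac] at h
  exact_mod_cast h.trans_lt (mul_lt_mul_of_pos_right hexp hfac)

lemma two_pow_two_pow_mul_lt_factorial (n : ℕ) :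
    2 ^ 2 ^ n * (2 * 2 ^ n) ^ 2 ^ (n + 6) < (2 ^ (n + 6))! := by
  set s := 2 ^ (n + 6)
  have hn : 2 ^ n ≤ s := Nat.pow_le_pow_right two_pos (by omega)
  refine Nat.lt_of_mul_lt_mul_left (a := 4 ^ s) ?_
  calc 4 ^ s * (2 ^ 2 ^ n * (2 * 2 ^ n) ^ s) = 2 ^ (2 * s + 2 ^ n + (n + 1) * s) := by
        rw [show (4 : ℕ) = 2 ^ 2 by rfl, ← pow_succ', ← pow_mul, ← pow_mul, pow_add, pow_add]
        ring
    _ ≤ 2 ^ ((n + 6) * s) := pow_le_pow_right₀ one_le_two (by nlinarith)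
    _ = s ^ s := by rw [pow_mul]
    _ < 4 ^ s * s ! := pow_self_lt_four_pow_mul_factorial (by positivity)

lemma pow_lt_two_pow_of_lt_rpow {u n k f : ℕ} (hk : k ≠ 0) (hf : f ≤ n * k + n)
    (hu : (u : ℝ) < (2 : ℝ) ^ ((n : ℝ) - ((f : ℝ) - n) / k)) : u ^ k < 2 ^ (n * k + n - f) := by
  have hexp : ((n : ℝ) - ((f : ℝ) - n) / k) * k = ((n * k + n - f : ℕ) : ℝ) := by
    rw [Nat.cast_sub hf]
    push_cast
    field_simp
    ring
  have h := pow_lt_pow_left₀ hu (Nat.cast_nonneg u) hk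
  rw [← Real.rpow_mul_natCast (by norm_num), hexp, Real.rpow_natCast] at h
  exact_mod_cast h

open scoped Classical in
/-- For all large `n`, every `k ≥ 1`, and every `f` with `n ≤ f ≤ nk − 3`, there is a
directed `k`-hypergraph (a set of `k`-tuples) on `2ⁿ` vertices with at least `2^f`
hyperedges such that every vertex set `U` with `|U| < 2^{n − (f−n)/k}` contains at
most `2^{n+6}` hyperedges. -/
theorem directed_hypergraphs_exist :
    ∃ n₀ : ℕ, ∀ n : ℕ, n₀ ≤ n → ∀ k : ℕ, 1 ≤ k → ∀ f : ℕ, n ≤ f → f ≤ n * k - 3 →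
      ∃ E : Finset (Fin k → Fin (2 ^ n)),
        2 ^ f ≤ E.card ∧
        ∀ U : Finset (Fin (2 ^ n)),
          (U.card : ℝ) < (2:ℝ) ^ ((n : ℝ) - ((f : ℝ) - (n : ℝ)) / (k : ℝ)) →
          (E.filter (fun t => ∀ i, t i ∈ U)).card ≤ 2 ^ (n + 6) := by
  refine ⟨0, fun n _ k hk f _ hfk => ?_⟩
  have hf : f ≤ n * k := hfk.trans (Nat.sub_le _ _)
  have hcard : Fintype.card (Fin k → Fin (2 ^ n)) = 2 ^ (n * k) := by simp [← pow_mul]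
  rcases le_or_gt f (n + 6) with hsmall | hlarge
  · obtain ⟨E, -, hE⟩ := exists_subset_card_eq (s := (univ : Finset (Fin k → Fin (2 ^ n))))
      (n := 2 ^ f) (by rw [card_univ, hcard]; exact Nat.pow_le_pow_right two_pos hf)
    exact ⟨E, hE.ge, fun U _ => (card_filter_le _ _).trans
      (hE.trans_le (Nat.pow_le_pow_right two_pos hsmall))⟩
  set small := univ.filter fun U : Finset (Fin (2 ^ n)) =>
    (#U : ℝ) < (2 : ℝ) ^ ((n : ℝ) - ((f : ℝ) - n) / k)
  have hspan : ∀ U ∈ small, #(Fintype.piFinset fun _ : Fin k => U) ≤ 2 ^ (n * k + n - f) :=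
    fun U hU => by
      simpa using (pow_lt_two_pow_of_lt_rpow (by omega) (by omega) (mem_filter.1 hU).2).le
  have hcount : #small * (2 ^ (n * k + n - f)).choose (2 ^ (n + 6)) * (2 ^ f).choose (2 ^ (n + 6))
      < (2 ^ (n * k)).choose (2 ^ (n + 6)) := by
    refine mul_choose_mul_choose_lt_choose (D := 2 ^ n) ?_ ?_ ?_
    · rw [← pow_add, ← pow_add]
      exact Nat.pow_le_pow_right two_pos (by omega)
    · rw [← pow_succ']
      exact Nat.pow_le_pow_right two_pos (by omega)
    · refine lt_of_le_of_lt (Nat.mul_le_mul_right _ ?_) (two_pow_two_pow_mul_lt_factorial n)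
      simpa using card_filter_le (univ : Finset (Finset (Fin (2 ^ n)))) _
  obtain ⟨E, hE, hsparse⟩ := exists_card_eq_forall_card_inter_lt small _ hspan
    (Nat.pow_le_pow_right two_pos hlarge.le)
    (by rw [hcard]; exact Nat.pow_le_pow_right two_pos hf) (by rwa [hcard])
  refine ⟨E, hE.ge, fun U hU => ?_⟩
  calc #(E.filter fun t => ∀ i, t i ∈ U) = #(E ∩ Fintype.piFinset fun _ => U) := by
        congr 1; ext t; simp
    _ ≤ 2 ^ (n + 6) := (hsparse U (mem_filter.2 ⟨mem_univ U, hU⟩)).le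
end
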